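/- arXiv:2211.11813 — 2 statements merged into one kernel-verified Lean document; each statement's English description precedes it below -/
import Mathlib

section
/- Let ω⁰ : ℝ² → ℝ³ be a simple solution of the H-system, i.e. ω⁰(z) = ω((az+b)/(cz+d)) + C for complex constants a, b, c, d with ad − bc ≠ 0 and a constant C ∈ ℝ³ (extended continuously at the pole of the Möbius map). Then there exists a constant K > 0 such that |∇ω⁰(z)| ≤ K/(1+|z|²) for all z ∈ ℝ². -/
/-!
In homogeneous coordinates `ω(u / v) = omegaHom (u, v)`, where `omegaHom` on `ℂ² ∖ 0` is invariant
under scaling by `ℂˣ`. Hence its differential at `p` kills the complex line through `p`, and since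
it is homogeneous of degree `-1`, compactness of the unit sphere bounds it by `C / ‖p‖`. Writing
`u = α p + (p₁u₂ - p₂u₁) / (|p₁|² + |p₂|²) · (-p̄₂, p̄₁)` then bounds its value at `u` by
`C |p₁u₂ - p₂u₁| / (|p₁|² + |p₂|²)`. A simple solution is `z ↦ omegaHom (az + b, cz + d) + C`;
in the direction `v` the determinant above is `-v (ad - bc)`, and
`|az + b|² + |cz + d|² ≥ μ (1 + |z|²)` because `(a b; c d)` is invertible.
-/

open MeasureTheory
open scoped RealInnerProductSpace

noncomputable section

/-- `E3` is Euclidean three-space. -/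
abbrev E3 := EuclideanSpace ℝ (Fin 3)

/-- The cross product on `ℝ³`. -/
def cross3 (a b : E3) : E3 :=
  (WithLp.equiv 2 (Fin 3 → ℝ)).symm
    ![a 1 * b 2 - a 2 * b 1, a 2 * b 0 - a 0 * b 2, a 0 * b 1 - a 1 * b 0]

/-- Directional (partial) derivative of `u : ℝ² → ℝ³` (the plane identified with `ℂ`)
in the direction `v`; `pdz u 1` is `u_x`, `pdz u Complex.I` is `u_y`. -/
def pdz (u : ℂ → E3) (v : ℂ) (z : ℂ) : E3 := fderiv ℝ u z v

/-- The componentwise Laplacian `Δu = u_xx + u_yy` of `u : ℝ² → ℝ³`. -/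
def lapz (u : ℂ → E3) (z : ℂ) : E3 :=
  fderiv ℝ (fun w => fderiv ℝ u w 1) z 1 +
    fderiv ℝ (fun w => fderiv ℝ u w Complex.I) z Complex.I

/-- The inverse stereographic projection `ω(x+iy) = (1+x²+y²)⁻¹ (2x, 2y, x²+y²−1)`. -/
def omegaS (z : ℂ) : E3 :=
  (1 + z.re ^ 2 + z.im ^ 2)⁻¹ •
    (WithLp.equiv 2 (Fin 3 → ℝ)).symm ![2 * z.re, 2 * z.im, z.re ^ 2 + z.im ^ 2 - 1]

/-- The energy density `|∇u|² = |u_x|² + |u_y|²`. -/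
def energyAt (u : ℂ → E3) (z : ℂ) : ℝ := ‖pdz u 1 z‖ ^ 2 + ‖pdz u Complex.I z‖ ^ 2

/-- A simple solution of the H-system: `z ↦ ω((az+b)/(cz+d)) + C` with `ad − bc ≠ 0`,
extended continuously across the pole of the Möbius map. -/
def IsSimpleSolution (w : ℂ → E3) : Prop :=
  ∃ (a b c d : ℂ) (C : E3), a * d - b * c ≠ 0 ∧ Continuous w ∧
    ∀ z : ℂ, c * z + d ≠ 0 → w z = omegaS ((a * z + b) / (c * z + d)) + C

open Complex ComplexConjugate Topology

@[fun_prop]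
theorem Complex.contDiff_re {n : WithTop ℕ∞} : ContDiff ℝ n re := reCLM.contDiff

@[fun_prop]
theorem Complex.contDiff_im {n : WithTop ℕ∞} : ContDiff ℝ n im := imCLM.contDiff

@[fun_prop]
theorem Complex.contDiff_normSq {n : WithTop ℕ∞} : ContDiff ℝ n normSq := by
  simpa [← normSq_eq_norm_sq] using contDiff_norm_sq ℝ (E := ℂ) (n := n)

theorem normSq_add_normSq_pos {p : ℂ × ℂ} (hp : p ≠ 0) : 0 < normSq p.1 + normSq p.2 := by
  contrapose! hp
  have h₁ := normSq_nonneg p.1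
  have h₂ := normSq_nonneg p.2
  exact Prod.ext (normSq_eq_zero.1 (by linarith)) (normSq_eq_zero.1 (by linarith))

section ScaleInvariant

variable {E F : Type*} [NormedAddCommGroup E] [NormedAddCommGroup F] [NormedSpace ℝ F]
  {f : E → F}

theorem exists_norm_fderiv_le_div_norm [NormedSpace ℝ E] [ProperSpace E]
    (hf : ∀ r : ℝ, 0 < r → ∀ x, f (r • x) = f x) (hC1 : ContDiffOn ℝ 1 f {0}ᶜ) :
    ∃ C > 0, ∀ p : E, p ≠ 0 → ‖fderiv ℝ f p‖ ≤ C / ‖p‖ := by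
  have hsphere : Metric.sphere (0 : E) 1 ⊆ {0}ᶜ := fun x hx => ne_zero_of_mem_unit_sphere ⟨x, hx⟩
  obtain ⟨C, hC⟩ := (isCompact_sphere (0 : E) 1).exists_bound_of_continuousOn
    ((hC1.continuousOn_fderiv_of_isOpen isOpen_compl_singleton le_rfl).mono hsphere)
  refine ⟨max C 1, by positivity, fun p hp => ?_⟩
  have hr : 0 < ‖p‖⁻¹ := by positivity
  have hscale : fderiv ℝ f p = ‖p‖⁻¹ • fderiv ℝ f (‖p‖⁻¹ • p) := by
    simp only [← fderiv_comp_smul, hf _ hr]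
  have hunit : ‖p‖⁻¹ • p ∈ Metric.sphere (0 : E) 1 := by
    simpa using norm_smul_inv_norm (𝕜 := ℝ) hp
  calc ‖fderiv ℝ f p‖ = ‖p‖⁻¹ * ‖fderiv ℝ f (‖p‖⁻¹ • p)‖ := by
        rw [hscale, norm_smul, Real.norm_of_nonneg hr.le]
    _ ≤ ‖p‖⁻¹ * max C 1 := by gcongr; exact (hC _ hunit).trans (le_max_left _ _)
    _ = max C 1 / ‖p‖ := by ring

theorem fderiv_apply_smul_self_eq_zero [NormedSpace ℂ E]
    (hf : ∀ l : ℂ, l ≠ 0 → ∀ x, f (l • x) = f x) {p : E} (hp : DifferentiableAt ℝ f p) (α : ℂ) :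
    fderiv ℝ f p (α • p) = 0 := by
  have hline : HasFDerivAt (fun l : ℂ => l • p) ((ContinuousLinearMap.id ℝ ℂ).smulRight p) 1 :=
    (hasFDerivAt_id 1).smul_const p
  have hcomp := (one_smul ℂ p ▸ hp.hasFDerivAt).comp 1 hline
  have hconst : (fun l : ℂ => f (l • p)) =ᶠ[𝓝 1] fun _ => f p := by
    filter_upwards [isOpen_ne.mem_nhds one_ne_zero] with l hl using hf l hl p
  simpa using congr($(hcomp.unique ((hasFDerivAt_const (f p) 1).congr_of_eventuallyEq hconst)) α)

theorem exists_norm_fderiv_apply_le {f : ℂ × ℂ → F}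
    (hf : ∀ l : ℂ, l ≠ 0 → ∀ x, f (l • x) = f x) (hC1 : ContDiffOn ℝ 1 f {0}ᶜ) :
    ∃ C > 0, ∀ p : ℂ × ℂ, p ≠ 0 → ∀ u : ℂ × ℂ,
      ‖fderiv ℝ f p u‖ ≤ C * ‖p.1 * u.2 - p.2 * u.1‖ / (normSq p.1 + normSq p.2) := by
  obtain ⟨C, hC, hbound⟩ := exists_norm_fderiv_le_div_norm
    (fun r hr x => by rw [← coe_smul, hf _ (ofReal_ne_zero.2 hr.ne')]) hC1
  refine ⟨C, hC, fun p hp u => ?_⟩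
  set n := normSq p.1 + normSq p.2
  set δ := p.1 * u.2 - p.2 * u.1
  set q : ℂ × ℂ := (-conj p.2, conj p.1)
  have hn : 0 < n := normSq_add_normSq_pos hp
  have hdecomp : u = ((conj p.1 * u.1 + conj p.2 * u.2) / n) • p + (δ / n) • q := by
    have hn' : (n : ℂ) = p.1 * conj p.1 + p.2 * conj p.2 := by simp [n, mul_conj]
    have hn0 : (n : ℂ) ≠ 0 := ofReal_ne_zero.2 hn.ne'
    ext1 <;> simp only [Prod.smul_fst, Prod.smul_snd, Prod.fst_add, Prod.snd_add, smul_eq_mul, q, δ]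
    · field_simp
      linear_combination u.1 * hn'
    · field_simp
      linear_combination u.2 * hn'
  have hq : ‖q‖ = ‖p‖ := by simp [q, Prod.norm_def, max_comm]
  have hdiff : DifferentiableAt ℝ f p :=
    (hC1.differentiableOn one_ne_zero).differentiableAt (isOpen_compl_singleton.mem_nhds hp)
  calc ‖fderiv ℝ f p u‖ = ‖fderiv ℝ f p ((δ / n) • q)‖ := by
        rw [hdecomp, map_add, fderiv_apply_smul_self_eq_zero hf hdiff, zero_add]
    _ ≤ ‖fderiv ℝ f p‖ * ‖(δ / n) • q‖ := (fderiv ℝ f p).le_opNorm _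
    _ ≤ C / ‖p‖ * (‖δ‖ / n * ‖p‖) := by
        rw [norm_smul, hq, norm_div, norm_real, Real.norm_of_nonneg hn.le]
        gcongr
        exact hbound p hp
    _ = C * ‖δ‖ / n := by field_simp

end ScaleInvariant

def omegaHom (p : ℂ × ℂ) : E3 :=
  (normSq p.1 + normSq p.2)⁻¹ •
    (WithLp.equiv 2 (Fin 3 → ℝ)).symm
      ![2 * (p.1 * conj p.2).re, 2 * (p.1 * conj p.2).im, normSq p.1 - normSq p.2]

theorem omegaHom_smul {l : ℂ} (hl : l ≠ 0) (p : ℂ × ℂ) : omegaHom (l • p) = omegaHom p := by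
  have hl' : normSq l ≠ 0 := normSq_eq_zero.not.2 hl
  have hc : l * p.1 * conj (l * p.2) = normSq l * (p.1 * conj p.2) := by
    rw [map_mul, normSq_eq_conj_mul_self]; ring
  simp only [omegaHom, Prod.smul_fst, Prod.smul_snd, smul_eq_mul, hc, normSq_mul, re_ofReal_mul,
    im_ofReal_mul, ← mul_add, ← mul_sub]
  ext i
  fin_cases i <;> simp <;> field_simp

theorem omegaHom_one_right (q : ℂ) : omegaHom (q, 1) = omegaS q := by
  ext i
  fin_cases i <;> simp [omegaHom, omegaS, normSq_apply] <;> ring_nf <;> simp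

theorem omegaHom_eq_omegaS (u : ℂ) {v : ℂ} (hv : v ≠ 0) : omegaHom (u, v) = omegaS (u / v) := by
  calc omegaHom (u, v) = omegaHom (v • (u / v, 1)) := by
        congr 1; ext <;> simp [mul_div_cancel₀ u hv]
    _ = omegaS (u / v) := by rw [omegaHom_smul hv, omegaHom_one_right]

theorem contDiffOn_omegaHom : ContDiffOn ℝ 1 omegaHom {0}ᶜ := by
  refine (ContDiffOn.inv (by fun_prop) fun p hp => (normSq_add_normSq_pos hp).ne').smul
    (ContDiff.contDiffOn ?_)
  rw [contDiff_piLp]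
  intro i
  fin_cases i <;> simp <;> fun_prop

theorem norm_mul_add_mul_sq_le (x y s t : ℂ) :
    ‖x * s + y * t‖ ^ 2 ≤ (‖x‖ ^ 2 + ‖y‖ ^ 2) * (normSq s + normSq t) := by
  have h := norm_add_le (x * s) (y * t)
  rw [norm_mul, norm_mul] at h
  rw [normSq_eq_norm_sq, normSq_eq_norm_sq]
  nlinarith [norm_nonneg (x * s + y * t), sq_nonneg (‖x‖ * ‖t‖ - ‖y‖ * ‖s‖)]

theorem exists_mul_one_add_sq_le_normSq {a b c d : ℂ} (hdet : a * d - b * c ≠ 0) :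
    ∃ μ > (0 : ℝ), ∀ z : ℂ, μ * (1 + ‖z‖ ^ 2) ≤ normSq (a * z + b) + normSq (c * z + d) := by
  set M := ‖a‖ ^ 2 + ‖b‖ ^ 2 + ‖c‖ ^ 2 + ‖d‖ ^ 2
  -- invert the matrix `(a b; c d)` to recover `(z, 1)` from `(a z + b, c z + d)`
  have key : ∀ z : ℂ, ‖a * d - b * c‖ ^ 2 * (1 + ‖z‖ ^ 2)
      ≤ M * (normSq (a * z + b) + normSq (c * z + d)) := fun z => by
    have h₁ := norm_mul_add_mul_sq_le a (-c) (c * z + d) (a * z + b)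
    have h₂ := norm_mul_add_mul_sq_le d (-b) (a * z + b) (c * z + d)
    rw [show a * (c * z + d) + -c * (a * z + b) = a * d - b * c by ring, norm_neg] at h₁
    rw [show d * (a * z + b) + -b * (c * z + d) = (a * d - b * c) * z by ring, norm_neg,
      norm_mul] at h₂
    linarith
  have hdet' : 0 < ‖a * d - b * c‖ ^ 2 := by positivity
  have hM : 0 < M := by
    have := key 0
    by_contra! h
    nlinarith [normSq_nonneg (a * 0 + b), normSq_nonneg (c * 0 + d)]
  refine ⟨‖a * d - b * c‖ ^ 2 / M, by positivity, fun z => ?_⟩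
  rw [div_mul_eq_mul_div, div_le_iff₀ hM]
  linarith [key z]

theorem mobius_pair_ne_zero {a b c d : ℂ} (hdet : a * d - b * c ≠ 0) (z : ℂ) :
    (a * z + b, c * z + d) ≠ 0 := by
  intro h
  have h₁ : a * z + b = 0 := congrArg Prod.fst h
  have h₂ : c * z + d = 0 := congrArg Prod.snd h
  exact hdet (by linear_combination a * h₂ - c * h₁)

theorem dense_setOf_mul_add_ne_zero {a b c d : ℂ} (hdet : a * d - b * c ≠ 0) :
    Dense {z : ℂ | c * z + d ≠ 0} := by
  refine (dense_compl_singleton (-d / c)).mono fun z hz hpole => ?_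
  have hc : c ≠ 0 := by
    rintro rfl
    obtain rfl : d = 0 := by simpa using hpole
    exact hdet (by ring)
  exact hz ((eq_div_iff hc).2 (by linear_combination hpole))

theorem IsSimpleSolution.exists_eq_omegaHom {w : ℂ → E3} (hw : IsSimpleSolution w) :
    ∃ (a b c d : ℂ) (C : E3), a * d - b * c ≠ 0 ∧
      w = fun z => omegaHom (a * z + b, c * z + d) + C := by
  obtain ⟨a, b, c, d, C, hdet, hcont, hform⟩ := hw
  refine ⟨a, b, c, d, C, hdet, hcont.ext_on (dense_setOf_mul_add_ne_zero hdet) ?_ fun z hz => ?_⟩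
  · exact (contDiffOn_omegaHom.continuousOn.comp_continuous (by fun_prop)
      (mobius_pair_ne_zero hdet)).add continuous_const
  · rw [hform z hz, omegaHom_eq_omegaS _ hz]

theorem IsSimpleSolution.exists_norm_fderiv_le {w : ℂ → E3} (hw : IsSimpleSolution w) :
    ∃ B > (0 : ℝ), ∀ z : ℂ, ‖fderiv ℝ w z‖ ≤ B / (1 + ‖z‖ ^ 2) := by
  obtain ⟨a, b, c, d, C, hdet, rfl⟩ := hw.exists_eq_omegaHom
  obtain ⟨C₀, hC₀, hbound⟩ :=
    exists_norm_fderiv_apply_le (fun _ hl => omegaHom_smul hl) contDiffOn_omegaHom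
  obtain ⟨μ, hμ, hlow⟩ := exists_mul_one_add_sq_le_normSq hdet
  refine ⟨C₀ * ‖a * d - b * c‖ / μ, by positivity, fun z => ?_⟩
  have hpair : (fun z : ℂ => (a * z + b, c * z + d)) = fun z => z • (a, c) + (b, d) := by
    ext z <;> simp [mul_comm]
  have hderiv : HasFDerivAt (fun z => omegaHom (a * z + b, c * z + d) + C)
      ((fderiv ℝ omegaHom (a * z + b, c * z + d)).comp
        ((ContinuousLinearMap.id ℝ ℂ).smulRight (a, c))) z := by
    have hdiff : DifferentiableAt ℝ omegaHom (a * z + b, c * z + d) :=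
      (contDiffOn_omegaHom.differentiableOn one_ne_zero).differentiableAt
        (isOpen_compl_singleton.mem_nhds (mobius_pair_ne_zero hdet z))
    refine (HasFDerivAt.comp (g := omegaHom) z hdiff.hasFDerivAt ?_).add_const C
    rw [hpair]
    exact ((hasFDerivAt_id z).smul_const (a, c)).add_const (b, d)
  refine ContinuousLinearMap.opNorm_le_bound _ (by positivity) fun v => ?_
  rw [hderiv.fderiv]
  calc _ ≤ C₀ * ‖(a * z + b) * (v * c) - (c * z + d) * (v * a)‖
          / (normSq (a * z + b) + normSq (c * z + d)) :=
        hbound _ (mobius_pair_ne_zero hdet z) (v • (a, c))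
    _ = C₀ * ‖a * d - b * c‖ * ‖v‖ / (normSq (a * z + b) + normSq (c * z + d)) := by
        rw [show (a * z + b) * (v * c) - (c * z + d) * (v * a) = -(v * (a * d - b * c)) by ring,
          norm_neg, norm_mul, mul_comm ‖v‖, mul_assoc]
    _ ≤ C₀ * ‖a * d - b * c‖ * ‖v‖ / (μ * (1 + ‖z‖ ^ 2)) := by gcongr; exact hlow z
    _ = C₀ * ‖a * d - b * c‖ / μ / (1 + ‖z‖ ^ 2) * ‖v‖ := by field_simp

theorem sqrt_energyAt_le (u : ℂ → E3) (z : ℂ) :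
    Real.sqrt (energyAt u z) ≤ Real.sqrt 2 * ‖fderiv ℝ u z‖ := by
  have h₁ := (fderiv ℝ u z).le_opNorm 1
  have h₂ := (fderiv ℝ u z).le_opNorm I
  rw [norm_one, mul_one] at h₁
  rw [norm_I, mul_one] at h₂
  rw [← Real.sqrt_sq (norm_nonneg (fderiv ℝ u z)), ← Real.sqrt_mul zero_le_two]
  apply Real.sqrt_le_sqrt
  simp only [energyAt, pdz]
  nlinarith [norm_nonneg (fderiv ℝ u z 1), norm_nonneg (fderiv ℝ u z I)]

/-- The gradient of a simple solution of the H-system satisfies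
`|∇ω⁰(z)| ≤ K/(1+|z|²)` for some constant `K > 0`. -/
theorem stmt3 (w : ℂ → E3) (hw : IsSimpleSolution w) :
    ∃ K > (0 : ℝ), ∀ z : ℂ, Real.sqrt (energyAt w z) ≤ K / (1 + ‖z‖ ^ 2) := by
  obtain ⟨B, hB, hbound⟩ := hw.exists_norm_fderiv_le
  refine ⟨Real.sqrt 2 * B, by positivity, fun z => ?_⟩
  calc Real.sqrt (energyAt w z) ≤ Real.sqrt 2 * ‖fderiv ℝ w z‖ := sqrt_energyAt_le w z
    _ ≤ Real.sqrt 2 * (B / (1 + ‖z‖ ^ 2)) := by gcongr; exact hbound z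
    _ = Real.sqrt 2 * B / (1 + ‖z‖ ^ 2) := (mul_div_assoc _ _ _).symm
end
end

section
/- There exists a constant C > 0 such that for all z₀ ∈ ℝ², ∫_{ℝ²} (1/|z − z₀|) · (1/(1 + |z|²)) dz ≤ C · ln(2 + |z₀|) / (1 + |z₀|). -/
open MeasureTheory

noncomputable section

/-- `E2` is the Euclidean plane. -/
abbrev E2 := EuclideanSpace ℝ (Fin 2)

/-- The first standard basis vector of the plane. -/
def e₁ : E2 := EuclideanSpace.single 0 1

/-- The second standard basis vector of the plane. -/
def e₂ : E2 := EuclideanSpace.single 1 1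

/-- The Laplacian `Δα = α_xx + α_yy` of a scalar function on the plane. -/
def lap2 (α : E2 → ℝ) (x : E2) : ℝ :=
  fderiv ℝ (fun y => fderiv ℝ α y e₁) x e₁ + fderiv ℝ (fun y => fderiv ℝ α y e₂) x e₂

/-!
Split the plane into the disc `|z - z₀| < (1 + |z₀|) / 2`, on which `1 + |z|² ≳ (1 + |z₀|)²`;
the rest of the disc `|z| ≤ 2 (1 + |z₀|)`, on which `|z - z₀|⁻¹ ≲ (1 + |z₀|)⁻¹`; and the exterior
`|z| > 2 (1 + |z₀|)`, on which `|z - z₀| ≥ |z| / 2`. On each piece the integrand is dominated by a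
radial function about `z₀` or about `0`, and in polar coordinates the three pieces contribute
`O(1 / (1 + |z₀|))`, `O(log (2 + |z₀|) / (1 + |z₀|))` and `O(1 / (1 + |z₀|))`.
-/

open Set Real

lemma integral_fun_norm_plane (f : ℝ → ℝ) :
    ∫ z : E2, f ‖z‖ = 2 * π * ∫ r in Ioi 0, r * f r := by
  rw [integral_fun_norm_addHaar volume f]
  simp only [finrank_euclideanSpace, Fintype.card_fin, Measure.real,
    EuclideanSpace.volume_ball_fin_two, ENNReal.ofReal_one, one_pow, one_mul,
    ENNReal.toReal_ofReal pi_nonneg, Nat.add_one_sub_one, pow_one, smul_eq_mul, nsmul_eq_mul,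
    Nat.cast_ofNat]
  ring

lemma integral_indicator_fun_norm_plane {s : Set ℝ} (hs : MeasurableSet s) (f : ℝ → ℝ) :
    ∫ z : E2, s.indicator f ‖z‖ = 2 * π * ∫ r in Ioi 0 ∩ s, r * f r := by
  rw [integral_fun_norm_plane, ← setIntegral_indicator hs]
  simp_rw [indicator_mul_right]

lemma integral_indicator_Iio_inv_norm {ρ : ℝ} (hρ : 0 ≤ ρ) :
    ∫ z : E2, (Iio ρ).indicator (·⁻¹) ‖z‖ = 2 * π * ρ := by
  rw [integral_indicator_fun_norm_plane measurableSet_Iio, Ioi_inter_Iio,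
    setIntegral_congr_fun measurableSet_Ioo fun r hr => mul_inv_cancel₀ hr.1.ne']
  simp [hρ]

lemma integral_indicator_Iic_one_add_sq_inv {S : ℝ} (hS : 0 ≤ S) :
    ∫ z : E2, (Iic S).indicator (fun r => (1 + r ^ 2)⁻¹) ‖z‖ = π * log (1 + S ^ 2) := by
  have hderiv : ∀ r ∈ uIcc 0 S,
      HasDerivAt (fun r => log (1 + r ^ 2) / 2) (r * (1 + r ^ 2)⁻¹) r := by
    intro r _
    have := ((hasDerivAt_pow 2 r).const_add 1).log (by positivity)
    refine (this.div_const 2).congr_deriv ?_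
    simp only [Nat.cast_ofNat, Nat.add_one_sub_one, pow_one]
    field_simp
  rw [integral_indicator_fun_norm_plane measurableSet_Iic, Ioi_inter_Iic,
    ← intervalIntegral.integral_of_le hS,
    intervalIntegral.integral_eq_sub_of_hasDerivAt hderiv (by
      apply Continuous.intervalIntegrable; fun_prop (disch := intro; positivity))]
  simp only [ne_eq, OfNat.ofNat_ne_zero, not_false_eq_true, zero_pow, add_zero, log_one,
    zero_div, sub_zero]
  ring

lemma integral_indicator_Ioi_pow_three_inv {S : ℝ} (hS : 0 < S) :
    ∫ z : E2, (Ioi S).indicator (fun r => (r ^ 3)⁻¹) ‖z‖ = 2 * π / S := by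
  have hpow : ∀ r ∈ Ioi S, r * (r ^ 3)⁻¹ = r ^ (-2 : ℝ) := by
    intro r hr
    have hr : 0 < r := hS.trans hr
    rw [rpow_neg hr.le, rpow_two]
    field_simp
  rw [integral_indicator_fun_norm_plane measurableSet_Ioi, Ioi_inter_Ioi, sup_eq_right.2 hS.le,
    setIntegral_congr_fun measurableSet_Ioi hpow, integral_Ioi_rpow_of_lt (by norm_num) hS]
  rw [show (-2 : ℝ) + 1 = -1 by norm_num, rpow_neg_one]
  ring

lemma integrable_indicator_Iio_inv_norm {ρ : ℝ} (hρ : 0 < ρ) :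
    Integrable fun z : E2 => (Iio ρ).indicator (·⁻¹) ‖z‖ :=
  .of_integral_ne_zero (by rw [integral_indicator_Iio_inv_norm hρ.le]; positivity)

lemma integrable_indicator_Iic_one_add_sq_inv {S : ℝ} (hS : 0 < S) :
    Integrable fun z : E2 => (Iic S).indicator (fun r => (1 + r ^ 2)⁻¹) ‖z‖ :=
  .of_integral_ne_zero (by
    rw [integral_indicator_Iic_one_add_sq_inv hS.le]
    exact (mul_pos pi_pos (log_pos (by nlinarith))).ne')

lemma integrable_indicator_Ioi_pow_three_inv {S : ℝ} (hS : 0 < S) :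
    Integrable fun z : E2 => (Ioi S).indicator (fun r => (r ^ 3)⁻¹) ‖z‖ :=
  .of_integral_ne_zero (by rw [integral_indicator_Ioi_pow_three_inv hS]; positivity)

section NormedGroup

variable {E : Type*} [NormedAddCommGroup E]

def kernelMajorant (z₀ z : E) : ℝ :=
  16 / (1 + ‖z₀‖) ^ 2 * (Iio ((1 + ‖z₀‖) / 2)).indicator (·⁻¹) ‖z - z₀‖
    + 2 / (1 + ‖z₀‖) * (Iic (2 * (1 + ‖z₀‖))).indicator (fun r => (1 + r ^ 2)⁻¹) ‖z‖
    + 2 * (Ioi (2 * (1 + ‖z₀‖))).indicator (fun r => (r ^ 3)⁻¹) ‖z‖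

lemma one_add_sq_inv_le_of_norm_sub_lt {z z₀ : E} (h : ‖z - z₀‖ < (1 + ‖z₀‖) / 2) :
    (1 + ‖z‖ ^ 2)⁻¹ ≤ 16 / (1 + ‖z₀‖) ^ 2 := by
  have hz : ‖z₀‖ - ‖z - z₀‖ ≤ ‖z‖ := by
    linarith [norm_sub_norm_le z₀ z, norm_sub_rev z₀ z]
  rw [← inv_div]
  refine inv_anti₀ (by positivity) ?_
  rw [div_le_iff₀ (by norm_num)]
  rcases le_or_gt ‖z₀‖ 3 with h3 | h3
  · nlinarith [norm_nonneg z₀, sq_nonneg ‖z‖]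
  · nlinarith [norm_nonneg z]

lemma inv_norm_sub_mul_le_of_two_mul_lt_norm {z z₀ : E} (h : 2 * (1 + ‖z₀‖) < ‖z‖) :
    ‖z - z₀‖⁻¹ * (1 + ‖z‖ ^ 2)⁻¹ ≤ 2 * (‖z‖ ^ 3)⁻¹ := by
  have hz : ‖z‖ / 2 ≤ ‖z - z₀‖ := by
    linarith [norm_sub_norm_le z z₀, norm_nonneg z₀]
  have hpos : 0 < ‖z‖ := by linarith [norm_nonneg z₀]
  calc ‖z - z₀‖⁻¹ * (1 + ‖z‖ ^ 2)⁻¹ ≤ (‖z‖ / 2)⁻¹ * (‖z‖ ^ 2)⁻¹ := by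
        gcongr
        linarith
    _ = 2 * (‖z‖ ^ 3)⁻¹ := by field_simp

lemma inv_norm_sub_mul_le_kernelMajorant (z₀ z : E) :
    ‖z - z₀‖⁻¹ * (1 + ‖z‖ ^ 2)⁻¹ ≤ kernelMajorant z₀ z := by
  set a := 1 + ‖z₀‖
  have ha : 0 < a := by positivity
  have near : 0 ≤ 16 / a ^ 2 * (Iio (a / 2)).indicator (·⁻¹) ‖z - z₀‖ :=
    mul_nonneg (by positivity) (indicator_apply_nonneg fun _ => by positivity)
  have mid : 0 ≤ 2 / a * (Iic (2 * a)).indicator (fun r => (1 + r ^ 2)⁻¹) ‖z‖ :=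
    mul_nonneg (by positivity) (indicator_apply_nonneg fun _ => by positivity)
  have far : 0 ≤ 2 * (Ioi (2 * a)).indicator (fun r => (r ^ 3)⁻¹) ‖z‖ :=
    mul_nonneg (by positivity) (indicator_apply_nonneg fun _ => by positivity)
  unfold kernelMajorant
  by_cases hnear : ‖z - z₀‖ < a / 2
  · rw [indicator_of_mem (mem_Iio.2 hnear), mul_comm (16 / a ^ 2)] at near ⊢
    have := mul_le_mul_of_nonneg_left (one_add_sq_inv_le_of_norm_sub_lt hnear)
      (inv_nonneg.2 (norm_nonneg (z - z₀)))
    linarith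
  by_cases hmid : ‖z‖ ≤ 2 * a
  · rw [indicator_of_mem (mem_Iic.2 hmid)] at mid ⊢
    have : ‖z - z₀‖⁻¹ ≤ 2 / a := by
      rw [← inv_div]; exact inv_anti₀ (by positivity) (not_lt.1 hnear)
    have := mul_le_mul_of_nonneg_right this (by positivity : 0 ≤ (1 + ‖z‖ ^ 2)⁻¹)
    linarith
  · rw [indicator_of_mem (mem_Ioi.2 (not_le.1 hmid))] at far ⊢
    linarith [inv_norm_sub_mul_le_of_two_mul_lt_norm (not_le.1 hmid)]

end NormedGroup

section Majorant

variable (z₀ : E2)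

lemma integrable_kernelMajorant_near :
    Integrable fun z : E2 =>
      16 / (1 + ‖z₀‖) ^ 2 * (Iio ((1 + ‖z₀‖) / 2)).indicator (·⁻¹) ‖z - z₀‖ :=
  ((integrable_indicator_Iio_inv_norm (by positivity)).comp_sub_right z₀).const_mul _

lemma integrable_kernelMajorant_mid :
    Integrable fun z : E2 =>
      2 / (1 + ‖z₀‖) * (Iic (2 * (1 + ‖z₀‖))).indicator (fun r => (1 + r ^ 2)⁻¹) ‖z‖ :=
  (integrable_indicator_Iic_one_add_sq_inv (by positivity)).const_mul _

lemma integrable_kernelMajorant_far :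
    Integrable fun z : E2 => 2 * (Ioi (2 * (1 + ‖z₀‖))).indicator (fun r => (r ^ 3)⁻¹) ‖z‖ :=
  (integrable_indicator_Ioi_pow_three_inv (by positivity)).const_mul _

lemma integrable_kernelMajorant : Integrable (kernelMajorant z₀) :=
  ((integrable_kernelMajorant_near z₀).add (integrable_kernelMajorant_mid z₀)).add
    (integrable_kernelMajorant_far z₀)

lemma integral_kernelMajorant :
    ∫ z, kernelMajorant z₀ z
      = (18 + 2 * log (1 + (2 * (1 + ‖z₀‖)) ^ 2)) * π / (1 + ‖z₀‖) := by
  have ha : 0 < 1 + ‖z₀‖ := by positivity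
  unfold kernelMajorant
  rw [integral_add
      ((integrable_kernelMajorant_near z₀).fun_add (integrable_kernelMajorant_mid z₀))
      (integrable_kernelMajorant_far z₀),
    integral_add (integrable_kernelMajorant_near z₀) (integrable_kernelMajorant_mid z₀),
    integral_const_mul, integral_const_mul, integral_const_mul,
    integral_sub_right_eq_self (fun z : E2 => (Iio _).indicator (·⁻¹) ‖z‖),
    integral_indicator_Iio_inv_norm (by positivity),
    integral_indicator_Iic_one_add_sq_inv (by positivity),
    integral_indicator_Ioi_pow_three_inv (by positivity)]
  field_simp
  ring

end Majorant

/-- Integral estimate for the Green kernel: there is `C > 0` with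
`∫_{ℝ²} |z − z₀|⁻¹ (1+|z|²)⁻¹ dz ≤ C ln(2+|z₀|)/(1+|z₀|)` for all `z₀`. -/
theorem stmt12 : ∃ C > (0 : ℝ), ∀ z₀ : E2,
    ∫ z : E2, ‖z - z₀‖⁻¹ * (1 + ‖z‖ ^ 2)⁻¹ ≤ C * Real.log (2 + ‖z₀‖) / (1 + ‖z₀‖) := by
  refine ⟨44 * π, by positivity, fun z₀ => ?_⟩
  have hlog : 18 + 2 * log (1 + (2 * (1 + ‖z₀‖)) ^ 2) ≤ 44 * log (2 + ‖z₀‖) := by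
    have half_lt_log : 1 / 2 < log (2 + ‖z₀‖) := lt_of_lt_of_le (by linarith [log_two_gt_d9])
      (log_le_log two_pos (by linarith [norm_nonneg z₀]))
    have log_le : log (1 + (2 * (1 + ‖z₀‖)) ^ 2) ≤ 4 * log (2 + ‖z₀‖) := by
      calc log (1 + (2 * (1 + ‖z₀‖)) ^ 2) ≤ log ((2 + ‖z₀‖) ^ 4) :=
            log_le_log (by positivity) (by nlinarith [norm_nonneg z₀])
        _ = 4 * log (2 + ‖z₀‖) := by rw [log_pow]; norm_num
    linarith
  calc ∫ z : E2, ‖z - z₀‖⁻¹ * (1 + ‖z‖ ^ 2)⁻¹ ≤ ∫ z, kernelMajorant z₀ z :=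
        integral_mono_of_nonneg (ae_of_all _ fun z => by positivity) (integrable_kernelMajorant z₀)
          (ae_of_all _ (inv_norm_sub_mul_le_kernelMajorant z₀))
    _ = (18 + 2 * log (1 + (2 * (1 + ‖z₀‖)) ^ 2)) * π / (1 + ‖z₀‖) := integral_kernelMajorant z₀
    _ ≤ 44 * π * log (2 + ‖z₀‖) / (1 + ‖z₀‖) := by
        rw [mul_right_comm]
        gcongr
end
end
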